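/- For a graph G on finite vertex set X and probability distribution P on X: the infimum over orthogonal-projection representations {U_x} of G (projections on some finite-dimensional Hilbert space with U_x U_{x'} = 0 whenever x ≠ x' are non-adjacent in the complement sense used for representations) and density operators F of Σ_x P(x) log(1/Tr(U_x F)) equals the infimum over rank-one (unit vector) representations {u_x} of G and unit vectors f of Σ_x P(x) log(1/|⟨u_x|f⟩|²). (Marton's θ(G,P) equals the projective variant θ_sp(G,P).) -/

import Mathlib

open Matrix
open scoped ComplexOrder

noncomputable def IsDensity {d : ℕ} (A : Matrix (Fin d) (Fin d) ℂ) : Prop :=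
  A.PosSemidef ∧ A.trace = 1

def IsProb {Z : Type*} [Fintype Z] (P : Z → ℝ) : Prop :=
  (∀ z, 0 ≤ P z) ∧ ∑ z, P z = 1

noncomputable def dotc {Z : Type*} [Fintype Z] (u v : Z → ℂ) : ℂ :=
  ∑ p, star (u p) * v p

/-- Values `Σ_x P(x) log(1/Tr(U_x F))` achieved by projection representations
of `G` (in any finite dimension) together with a density operator `F`, with all
`Tr(U_x F) > 0` (the excluded cases correspond to the value `+∞`). -/
def thetaSpValues {X : Type*} [Fintype X] (G : SimpleGraph X) (P : X → ℝ) : Set ℝ :=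
  {r | ∃ d : ℕ, ∃ U : X → Matrix (Fin d) (Fin d) ℂ, ∃ F : Matrix (Fin d) (Fin d) ℂ,
    (∀ x, (U x).IsHermitian ∧ U x * U x = U x) ∧
    (∀ x x', x ≠ x' → ¬ G.Adj x x' → U x * U x' = 0) ∧
    IsDensity F ∧ (∀ x, 0 < ((U x * F).trace.re)) ∧
    r = ∑ x, P x * Real.log (1 / ((U x * F).trace.re))}

/-- Values `Σ_x P(x) log(1/|⟨u_x|f⟩|²)` achieved by orthonormal (unit-vector)
representations of `G` and unit vectors (handles) `f`. -/
def thetaMartonValues {X : Type*} [Fintype X] (G : SimpleGraph X) (P : X → ℝ) : Set ℝ :=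
  {r | ∃ d : ℕ, ∃ u : X → Fin d → ℂ, ∃ f : Fin d → ℂ,
    (∀ x, ∑ i, Complex.normSq (u x i) = 1) ∧
    (∀ x x', x ≠ x' → ¬ G.Adj x x' → dotc (u x) (u x') = 0) ∧
    (∑ i, Complex.normSq (f i) = 1) ∧
    (∀ x, 0 < Complex.normSq (dotc (u x) f)) ∧
    r = ∑ x, P x * Real.log (1 / Complex.normSq (dotc (u x) f))}

/-! The two value sets coincide. A unit vector `u` gives the rank-one projection `|u⟩⟨u|`, and
`Tr(|u⟩⟨u| |f⟩⟨f|) = |⟨u|f⟩|²`. Conversely, put `S = √F` and pass to Hilbert–Schmidt space: the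
vectors `vec (U_x S)` have Gram matrix `Tr(U_x U_x' F)`, so they inherit the orthogonality of the
`U_x`, and `‖vec (U_x S)‖² = ⟨vec (U_x S), vec S⟩ = Tr(U_x F)` because `U_x` is a projection.
Normalizing them gives unit vectors whose overlap with the unit vector `vec S` has squared modulus
`Tr(U_x F)`. -/

section dotc

variable {Z : Type*} [Fintype Z]

lemma dotc_eq_star_dotProduct (u v : Z → ℂ) : dotc u v = star u ⬝ᵥ v := rfl

lemma star_dotc (u v : Z → ℂ) : star (dotc u v) = dotc v u := by
  simp only [dotc, star_sum, star_mul, star_star, mul_comm]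

lemma dotc_self_eq_sum_normSq (v : Z → ℂ) :
    dotc v v = ((∑ i, Complex.normSq (v i) : ℝ) : ℂ) := by
  push_cast
  exact Finset.sum_congr rfl fun i _ => by rw [Complex.normSq_eq_conj_mul_self]; rfl

lemma dotc_self_eq_one_iff (v : Z → ℂ) : dotc v v = 1 ↔ ∑ i, Complex.normSq (v i) = 1 := by
  rw [dotc_self_eq_sum_normSq]; exact_mod_cast Iff.rfl

lemma dotc_smul_smul (c c' : ℂ) (u v : Z → ℂ) :
    dotc (c • u) (c' • v) = star c * c' * dotc u v := by
  simp only [dotc, Finset.mul_sum, Pi.smul_apply, smul_eq_mul, star_mul]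
  exact Finset.sum_congr rfl fun i _ => by ring

lemma dotc_smul_left (c : ℂ) (u v : Z → ℂ) : dotc (c • u) v = star c * dotc u v := by
  simpa using dotc_smul_smul c 1 u v

lemma dotc_comp_equiv {Z' : Type*} [Fintype Z'] (e : Z' ≃ Z) (u v : Z → ℂ) :
    dotc (u ∘ e) (v ∘ e) = dotc u v :=
  e.sum_comp fun p => star (u p) * v p

end dotc

section rankOne

variable {n : Type*} [Fintype n]

lemma vecMulVec_star_mul_vecMulVec_star (u v w f : n → ℂ) :
    vecMulVec u (star v) * vecMulVec w (star f) = dotc v w • vecMulVec u (star f) := by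
  rw [vecMulVec_mul_vecMulVec, vecMulVec_smul]; rfl

lemma trace_vecMulVec_star (u v : n → ℂ) : (vecMulVec u (star v)).trace = dotc v u := by
  rw [trace_vecMulVec, dotProduct_comm]; rfl

lemma trace_vecMulVec_star_mul_vecMulVec_star (u f : n → ℂ) :
    (vecMulVec u (star u) * vecMulVec f (star f)).trace = Complex.normSq (dotc u f) := by
  rw [vecMulVec_star_mul_vecMulVec_star, trace_smul, trace_vecMulVec_star, smul_eq_mul,
    ← star_dotc u f, Complex.star_def, Complex.mul_conj]

end rankOne

lemma star_vec_mul_dotProduct_vec_mul {n R : Type*} [Fintype n] [CommRing R] [StarRing R]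
    {A S : Matrix n n R} (hA : A.IsHermitian) (hS : S.IsHermitian) (B : Matrix n n R) :
    star (vec (A * S)) ⬝ᵥ vec (B * S) = (A * B * (S * S)).trace := by
  rw [star_vec_dotProduct_vec, conjTranspose_mul, hA.eq, hS.eq, Matrix.mul_assoc,
    trace_mul_comm, Matrix.mul_assoc, Matrix.mul_assoc, Matrix.mul_assoc]

lemma exists_real_smul_unit_of_dotc_eq_dotc_self {Z : Type*} [Fintype Z] {a f : Z → ℂ}
    (ha : 0 < (dotc a a).re) (haf : dotc a f = dotc a a) :
    ∃ c : ℝ, dotc ((c : ℂ) • a) ((c : ℂ) • a) = 1 ∧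
      Complex.normSq (dotc ((c : ℂ) • a) f) = (dotc a a).re := by
  obtain ⟨t, ht⟩ : ∃ t : ℝ, dotc a a = t := ⟨_, dotc_self_eq_sum_normSq a⟩
  rw [ht, Complex.ofReal_re] at ha ⊢
  rw [ht] at haf
  have hsqrt : √t ^ 2 = t := Real.sq_sqrt ha.le
  refine ⟨(√t)⁻¹, ?_, ?_⟩
  · rw [dotc_smul_smul, Complex.star_def, Complex.conj_ofReal, ht]
    push_cast
    field_simp
    exact_mod_cast hsqrt.symm
  · rw [dotc_smul_left, haf, Complex.star_def, Complex.conj_ofReal, ← Complex.ofReal_mul,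
      Complex.normSq_ofReal]
    field_simp
    exact hsqrt.symm

section theta

variable {X : Type*} [Fintype X] (G : SimpleGraph X) (P : X → ℝ)

lemma mem_thetaMartonValues {Z : Type*} [Fintype Z] (u : X → Z → ℂ) (f : Z → ℂ)
    (hu : ∀ x, dotc (u x) (u x) = 1)
    (horth : ∀ x x', x ≠ x' → ¬ G.Adj x x' → dotc (u x) (u x') = 0)
    (hf : dotc f f = 1) (hpos : ∀ x, 0 < Complex.normSq (dotc (u x) f)) :
    ∑ x, P x * Real.log (1 / Complex.normSq (dotc (u x) f)) ∈ thetaMartonValues G P := by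
  let e := (Fintype.equivFin Z).symm
  have he : ∀ v w : Z → ℂ, dotc (v ∘ e) (w ∘ e) = dotc v w := dotc_comp_equiv e
  refine ⟨Fintype.card Z, fun x => u x ∘ e, f ∘ e,
    fun x => by rw [← dotc_self_eq_one_iff, he, hu],
    fun x x' hx hadj => by rw [he, horth x x' hx hadj],
    by rw [← dotc_self_eq_one_iff, he, hf], fun x => by rw [he]; exact hpos x, by simp only [he]⟩

lemma thetaMartonValues_subset_thetaSpValues : thetaMartonValues G P ⊆ thetaSpValues G P := by
  rintro r ⟨d, u, f, hu, horth, hf, hpos, rfl⟩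
  simp only [← dotc_self_eq_one_iff] at hu hf
  refine ⟨d, fun x => vecMulVec (u x) (star (u x)), vecMulVec f (star f), fun x => ⟨?_, ?_⟩,
    fun x x' hx hadj => ?_, ⟨posSemidef_vecMulVec_self_star f, ?_⟩, ?_, ?_⟩
  · exact (posSemidef_vecMulVec_self_star _).isHermitian
  · rw [vecMulVec_star_mul_vecMulVec_star, hu, one_smul]
  · rw [vecMulVec_star_mul_vecMulVec_star, horth x x' hx hadj, zero_smul]
  · rw [trace_vecMulVec_star, hf]
  all_goals simp only [trace_vecMulVec_star_mul_vecMulVec_star, Complex.ofReal_re, hpos,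
    implies_true]

open scoped MatrixOrder in
lemma thetaSpValues_subset_thetaMartonValues : thetaSpValues G P ⊆ thetaMartonValues G P := by
  rintro r ⟨d, U, F, hU, horth, hF, hpos, rfl⟩
  set S := CFC.sqrt F
  have hS : S.IsHermitian := (CFC.sqrt_nonneg F).posSemidef.isHermitian
  have hSS : S * S = F := CFC.sqrt_mul_sqrt_self F hF.1.nonneg
  have gram : ∀ x B, dotc (vec (U x * S)) (vec (B * S)) = (U x * B * F).trace := fun x B => by
    rw [dotc_eq_star_dotProduct, ← hSS, star_vec_mul_dotProduct_vec_mul (hU x).1 hS]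
  have hself : ∀ x, dotc (vec (U x * S)) (vec (U x * S)) = (U x * F).trace := fun x => by
    rw [gram, (hU x).2]
  have hf : ∀ x, dotc (vec (U x * S)) (vec S) = (U x * F).trace := fun x => by
    simpa using gram x 1
  choose c hc_unit hc_normSq using fun x =>
    exists_real_smul_unit_of_dotc_eq_dotc_self (a := vec (U x * S)) (f := vec S)
      (by rw [hself]; exact hpos x) ((hf x).trans (hself x).symm)
  simp only [hself] at hc_normSq
  have hS_unit : dotc (vec S) (vec S) = 1 := by
    simpa [dotc_eq_star_dotProduct, hSS, hF.2] using
      star_vec_mul_dotProduct_vec_mul isHermitian_one hS 1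
  convert mem_thetaMartonValues G P (fun x => (c x : ℂ) • vec (U x * S)) (vec S) hc_unit
    (fun x x' hx hadj => by rw [dotc_smul_smul, gram, horth x x' hx hadj]; simp) hS_unit
    (fun x => hc_normSq x ▸ hpos x) using 5 with x
  exact (hc_normSq x).symm

lemma thetaSpValues_eq_thetaMartonValues : thetaSpValues G P = thetaMartonValues G P :=
  (thetaSpValues_subset_thetaMartonValues G P).antisymm
    (thetaMartonValues_subset_thetaSpValues G P)

end theta

theorem thetaSp_eq_thetaMarton_general {X : Type*} [Fintype X] (G : SimpleGraph X)
    (P : X → ℝ) :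
    sInf (thetaSpValues G P) = sInf (thetaMartonValues G P) := by
  rw [thetaSpValues_eq_thetaMartonValues]

/-- Marton's `θ(G,P)` equals its projective variant `θ_sp(G,P)`. -/
theorem thetaSp_eq_thetaMarton {X : Type*} [Fintype X] (G : SimpleGraph X)
    (P : X → ℝ) (hP : IsProb P) :
    sInf (thetaSpValues G P) = sInf (thetaMartonValues G P) :=
  thetaSp_eq_thetaMarton_general G P
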